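/- arXiv:2109.04258 — 2 statements merged into one kernel-verified Lean document; each statement's English description precedes it below -/
import Mathlib

section
/- Prefix-derivation lemma for general VPGs: for nonterminals L₁, L₂, L₃, stack T, and terminal strings w₁, w, if L₂ →* w₁ L₃, well-matched(w₁), and ({(L₁, L₃)}, T) ⇝ w, then ({(L₁, L₂)}, T) ⇝ w₁ w. -/
namespace VPG

/-- Terminals of a visibly pushdown grammar: plain, call, and return symbols. -/
inductive VTerm (Pl Ca Re : Type) : Type
  | pl : Pl → VTerm Pl Ca Re
  | ca : Ca → VTerm Pl Ca Re
  | re : Re → VTerm Pl Ca Re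

/-- Grammar symbols: terminals or nonterminals. -/
inductive VSym (N Pl Ca Re : Type) : Type
  | t : VTerm Pl Ca Re → VSym N Pl Ca Re
  | nt : N → VSym N Pl Ca Re

/-- Production rules of a general VPG: `L → ε`, `L → i L₁`, or `L → ‹a L₁ b› L₂`. -/
inductive GRule (N Pl Ca Re : Type) : Type
  | eps (L : N)
  | lin (L : N) (i : VTerm Pl Ca Re) (L1 : N)
  | mat (L : N) (a : Ca) (L1 : N) (b : Re) (L2 : N)

variable {N Pl Ca Re : Type}

def GRule.lhs : GRule N Pl Ca Re → N
  | .eps L => L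
  | .lin L _ _ => L
  | .mat L _ _ _ _ => L

def GRule.rhs : GRule N Pl Ca Re → List (VSym N Pl Ca Re)
  | .eps _ => []
  | .lin _ i L1 => [.t i, .nt L1]
  | .mat _ a L1 b L2 => [.t (.ca a), .nt L1, .t (.re b), .nt L2]

/-- The well-formedness conditions of a general VPG with respect to the
partition `V = V⁰ ∪ V¹` (where `V0` is the set of well-matched nonterminals):
in `L → i L₁`, if `L ∈ V⁰` then `i` is a plain symbol and `L₁ ∈ V⁰`; in
`L → ‹a L₁ b› L₂`, `L₁ ∈ V⁰` and if `L ∈ V⁰` then `L₂ ∈ V⁰`. -/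
def GWellFormed (V0 : Set N) (P : Set (GRule N Pl Ca Re)) : Prop :=
  (∀ L i L1, GRule.lin L i L1 ∈ P → L ∈ V0 → (∃ c, i = VTerm.pl c) ∧ L1 ∈ V0) ∧
  (∀ L a L1 b L2, GRule.mat L a L1 b L2 ∈ P → L1 ∈ V0 ∧ (L ∈ V0 → L2 ∈ V0))

/-- One derivation step of the context-free derivation relation. -/
inductive Derives1 (P : Set (GRule N Pl Ca Re)) :
    List (VSym N Pl Ca Re) → List (VSym N Pl Ca Re) → Prop
  | step (r : GRule N Pl Ca Re) (hr : r ∈ P) (pre post : List (VSym N Pl Ca Re)) :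
      Derives1 P (pre ++ VSym.nt r.lhs :: post) (pre ++ r.rhs ++ post)

/-- The usual (reflexive-transitive) context-free derivation relation. -/
def Derives (P : Set (GRule N Pl Ca Re)) :
    List (VSym N Pl Ca Re) → List (VSym N Pl Ca Re) → Prop :=
  Relation.ReflTransGen (Derives1 P)

/-- `L →* w` for a terminal string `w`. -/
def DerivesStr (P : Set (GRule N Pl Ca Re)) (L : N) (w : List (VTerm Pl Ca Re)) : Prop :=
  Derives P [VSym.nt L] (w.map VSym.t)

/-- Well-matched terminal strings: every call symbol is matched with a
corresponding return symbol and vice versa. -/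
inductive WellMatched : List (VTerm Pl Ca Re) → Prop
  | nil : WellMatched []
  | plain (c : Pl) {w : List (VTerm Pl Ca Re)} (h : WellMatched w) :
      WellMatched (VTerm.pl c :: w)
  | mat (a : Ca) (b : Re) {w1 w2 : List (VTerm Pl Ca Re)}
      (h1 : WellMatched w1) (h2 : WellMatched w2) :
      WellMatched (VTerm.ca a :: w1 ++ VTerm.re b :: w2)

/-- Terminal strings in which every return symbol is matched with a call
symbol, while call symbols may be pending. -/
inductive MatchedRets : List (VTerm Pl Ca Re) → Prop
  | nil : MatchedRets []
  | plain (c : Pl) {w : List (VTerm Pl Ca Re)} (h : MatchedRets w) :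
      MatchedRets (VTerm.pl c :: w)
  | callPend (a : Ca) {w : List (VTerm Pl Ca Re)} (h : MatchedRets w) :
      MatchedRets (VTerm.ca a :: w)
  | mat (a : Ca) (b : Re) {w1 w2 : List (VTerm Pl Ca Re)}
      (h1 : WellMatched w1) (h2 : MatchedRets w2) :
      MatchedRets (VTerm.ca a :: w1 ++ VTerm.re b :: w2)

/-- A PDA state: a set of pairs of nonterminals. -/
abbrev PState (N : Type) := Set (N × N)

/-- A PDA stack: a list of stack symbols `[S, ‹a]` (`[]` is the empty stack `⊥`). -/
abbrev PStack (N Ca : Type) := List (PState N × Ca)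

/-- Acceptance `(S, T) ⇝ w` of a terminal string by a configuration,
for general VPGs. -/
inductive GAccepts (P : Set (GRule N Pl Ca Re)) :
    PState N → PStack N Ca → List (VTerm Pl Ca Re) → Prop
  | bot {S : PState N} {w : List (VTerm Pl Ca Re)} (L1 L2 : N)
      (h : (L1, L2) ∈ S) (hd : DerivesStr P L2 w) :
      GAccepts P S [] w
  | mat {S S' : PState N} {a : Ca} {T' : PStack N Ca}
      {w1 w2 : List (VTerm Pl Ca Re)} (b : Re) (L1 L2 L3 L4 L5 : N)
      (h34 : (L3, L4) ∈ S) (hd : DerivesStr P L4 w1) (hwm : WellMatched w1)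
      (h12 : (L1, L2) ∈ S') (hrule : GRule.mat L2 a L3 b L5 ∈ P)
      (hrec : GAccepts P {(L1, L5)} T' w2) :
      GAccepts P S ((S', a) :: T') (w1 ++ VTerm.re b :: w2)
  | matPend {S S' : PState N} {a : Ca} {T' : PStack N Ca}
      {w1 w2 : List (VTerm Pl Ca Re)} (b : Re) (L1 L2 L3 L4 L5 : N)
      (h34 : (L3, L4) ∈ S)
      (hd : Derives P [VSym.nt L4] (w1.map VSym.t ++ [VSym.t (VTerm.re b), VSym.nt L5]))
      (hwm : WellMatched w1)
      (h12 : (L1, L2) ∈ S') (hrule : GRule.lin L2 (VTerm.ca a) L3 ∈ P)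
      (hrec : GAccepts P {(L1, L5)} T' w2) :
      GAccepts P S ((S', a) :: T') (w1 ++ VTerm.re b :: w2)
  | pend {S S' : PState N} {a : Ca} {T' : PStack N Ca}
      {w1 : List (VTerm Pl Ca Re)} (L1 L2 L3 L4 : N)
      (h34 : (L3, L4) ∈ S) (hd : DerivesStr P L4 w1) (hmr : MatchedRets w1)
      (h12 : (L1, L2) ∈ S') (hrule : GRule.lin L2 (VTerm.ca a) L3 ∈ P) :
      GAccepts P S ((S', a) :: T') w1

/-- The derivative function for a plain symbol `c` (state part). -/
def gDeltaPlain (P : Set (GRule N Pl Ca Re)) (c : Pl) (S : PState N) : PState N :=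
  { q | ∃ L2, (q.1, L2) ∈ S ∧ GRule.lin L2 (VTerm.pl c) q.2 ∈ P }

/-- The derivative function for a call symbol `‹a` (state part): `S' ∪ S_p`. -/
def gDeltaCall (P : Set (GRule N Pl Ca Re)) (a : Ca) (S : PState N) : PState N :=
  { q | ∃ L1 L2 L3 L4 b, q = (L3, L3) ∧ (L1, L2) ∈ S ∧ GRule.mat L2 a L3 b L4 ∈ P } ∪
  { q | ∃ L1 L2 L3, q = (L3, L3) ∧ (L1, L2) ∈ S ∧ GRule.lin L2 (VTerm.ca a) L3 ∈ P }

/-- The derivative function for a return symbol `b›` with stack top `[S1, ‹a]`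
(state part): `S' ∪ S_p1`. -/
def gDeltaRetTop (P : Set (GRule N Pl Ca Re)) (b : Re) (S S1 : PState N) (a : Ca) :
    PState N :=
  { q | ∃ L1 L2 L3 L4 L5, q = (L1, L5) ∧ (L1, L2) ∈ S1 ∧ (L3, L4) ∈ S ∧
      GRule.eps L4 ∈ P ∧ GRule.mat L2 a L3 b L5 ∈ P } ∪
  { q | ∃ L1 L2 L3 L4 L5, q = (L1, L5) ∧ (L1, L2) ∈ S1 ∧ (L3, L4) ∈ S ∧
      GRule.lin L2 (VTerm.ca a) L3 ∈ P ∧ GRule.lin L4 (VTerm.re b) L5 ∈ P }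

/-- The derivative function for a return symbol `b›` with empty stack
(state part): `S_p2`. -/
def gDeltaRetEmpty (P : Set (GRule N Pl Ca Re)) (b : Re) (S : PState N) : PState N :=
  { q | ∃ L1 L2 L3, q = (L3, L3) ∧ (L1, L2) ∈ S ∧ GRule.lin L2 (VTerm.re b) L3 ∈ P }

/-- One transition of the general-VPG recognizer PDA (derivative transition). -/
def gStep (P : Set (GRule N Pl Ca Re)) (cfg : PState N × PStack N Ca)
    (i : VTerm Pl Ca Re) : PState N × PStack N Ca :=
  match i, cfg with
  | .pl c, (S, T) => (gDeltaPlain P c S, T)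
  | .ca a, (S, T) => (gDeltaCall P a S, (S, a) :: T)
  | .re b, (S, (S1, a) :: T) => (gDeltaRetTop P b S S1 a, T)
  | .re b, (S, []) => (gDeltaRetEmpty P b S, [])

/-- Running the general-VPG recognizer PDA on an input string. -/
def gRun (P : Set (GRule N Pl Ca Re)) :
    List (VTerm Pl Ca Re) → PState N × PStack N Ca → PState N × PStack N Ca
  | [], cfg => cfg
  | i :: w, cfg => gRun P w (gStep P cfg i)

/-- An acceptance configuration for strings with pending calls/returns. -/
def GAccConfig (P : Set (GRule N Pl Ca Re)) (cfg : PState N × PStack N Ca) : Prop :=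
  (∃ L1 L2, (L1, L2) ∈ cfg.1 ∧ GRule.eps L2 ∈ P) ∧
  (cfg.2 = [] ∨
    ∃ S' a T', cfg.2 = (S', a) :: T' ∧
      ∃ L3 L4 L', (L3, L4) ∈ S' ∧ GRule.lin L4 (VTerm.ca a) L' ∈ P)

/-- Acceptance of a string by the general-VPG recognizer PDA. -/
def GPDAAccepts (P : Set (GRule N Pl Ca Re)) (L0 : N) (w : List (VTerm Pl Ca Re)) : Prop :=
  GAccConfig P (gRun P w (({(L0, L0)} : PState N), ([] : PStack N Ca)))


lemma derives1_ctx {P : Set (GRule N Pl Ca Re)} {u v : List (VSym N Pl Ca Re)}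
    (l r : List (VSym N Pl Ca Re)) (h : Derives1 P u v) :
    Derives1 P (l ++ u ++ r) (l ++ v ++ r) := by
  cases h with
  | step rule hr pre post =>
    have := Derives1.step (P := P) rule hr (l ++ pre) (post ++ r)
    simpa only [List.append_assoc, List.cons_append] using this

lemma derives_ctx {P : Set (GRule N Pl Ca Re)} {u v : List (VSym N Pl Ca Re)}
    (l r : List (VSym N Pl Ca Re)) (h : Derives P u v) :
    Derives P (l ++ u ++ r) (l ++ v ++ r) := by
  induction h with
  | refl => exact Relation.ReflTransGen.refl
  | tail _ h2 ih => exact Relation.ReflTransGen.tail ih (derives1_ctx l r h2)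

lemma derives_prefix {P : Set (GRule N Pl Ca Re)} {L2 L3 : N}
    {w1 : List (VTerm Pl Ca Re)} {u : List (VSym N Pl Ca Re)}
    (h1 : Derives P [VSym.nt L2] (w1.map VSym.t ++ [VSym.nt L3]))
    (h2 : Derives P [VSym.nt L3] u) :
    Derives P [VSym.nt L2] (w1.map VSym.t ++ u) := by
  refine Relation.ReflTransGen.trans h1 ?_
  have := derives_ctx (w1.map VSym.t) [] h2
  simpa [Derives] using this

lemma wellMatched_append {w1 w2 : List (VTerm Pl Ca Re)}
    (h1 : WellMatched w1) (h2 : WellMatched w2) : WellMatched (w1 ++ w2) := by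
  induction h1 with
  | nil => simpa
  | plain c _ ih => exact WellMatched.plain c ih
  | mat a b hu1 hu2 ih1 ih2 =>
    have := WellMatched.mat a b hu1 ih2
    simpa only [List.append_assoc, List.cons_append] using this

lemma matchedRets_append {w1 w2 : List (VTerm Pl Ca Re)}
    (h1 : WellMatched w1) (h2 : MatchedRets w2) : MatchedRets (w1 ++ w2) := by
  induction h1 with
  | nil => simpa
  | plain c _ ih => exact MatchedRets.plain c ih
  | mat a b hu1 hu2 ih1 ih2 =>
    have := MatchedRets.mat a b hu1 ih2
    simpa only [List.append_assoc, List.cons_append] using this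

/-- Prefix-derivation lemma for general VPGs. -/
theorem gAccepts_prefix_derivation (P : Set (GRule N Pl Ca Re)) (V0 : Set N)
    (hwf : GWellFormed V0 P) (L1 L2 L3 : N) (T : PStack N Ca)
    (w1 w : List (VTerm Pl Ca Re))
    (hder : Derives P [VSym.nt L2] (w1.map VSym.t ++ [VSym.nt L3]))
    (hwm : WellMatched w1)
    (hacc : GAccepts P {(L1, L3)} T w) :
    GAccepts P {(L1, L2)} T (w1 ++ w) := by
  cases hacc with
  | bot La Lb h hd =>
    obtain ⟨rfl, rfl⟩ : La = L1 ∧ Lb = L3 := by simpa using h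
    refine GAccepts.bot La L2 rfl ?_
    have := derives_prefix hder hd
    simpa [DerivesStr] using this
  | mat b La Lb Lc Ld Le h34 hd hwm' h12 hrule hrec =>
    obtain ⟨rfl, rfl⟩ : Lc = L1 ∧ Ld = L3 := by simpa using h34
    rw [show w1 ++ (_ ++ VTerm.re b :: _) = (w1 ++ _) ++ VTerm.re b :: _ from
      (List.append_assoc _ _ _).symm]
    refine GAccepts.mat b La Lb Lc L2 Le rfl ?_
      (wellMatched_append hwm hwm') h12 hrule hrec
    have := derives_prefix hder hd
    simpa [DerivesStr] using this
  | matPend b La Lb Lc Ld Le h34 hd hwm' h12 hrule hrec =>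
    obtain ⟨rfl, rfl⟩ : Lc = L1 ∧ Ld = L3 := by simpa using h34
    rw [show w1 ++ (_ ++ VTerm.re b :: _) = (w1 ++ _) ++ VTerm.re b :: _ from
      (List.append_assoc _ _ _).symm]
    refine GAccepts.matPend b La Lb Lc L2 Le rfl ?_
      (wellMatched_append hwm hwm') h12 hrule hrec
    have := derives_prefix hder hd
    simpa using this
  | pend La Lb Lc Ld h34 hd hmr h12 hrule =>
    obtain ⟨rfl, rfl⟩ : Lc = L1 ∧ Ld = L3 := by simpa using h34
    refine GAccepts.pend La Lb Lc L2 rfl ?_ (matchedRets_append hwm hmr) h12 hrule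
    have := derives_prefix hder hd
    simpa [DerivesStr] using this

end VPG
end

section
/- Correctness of the plain-symbol derivative for general VPGs: for any plain symbol c ∈ Σ_l, PDA state S, stack T, and terminal string w, if δ_c(S) = (S', λT.T), then (S, T) ⇝ c w if and only if (S', T) ⇝ w. -/
namespace VPG

variable {N Pl Ca Re : Type}

lemma derives1_inv {P : Set (GRule N Pl Ca Re)} {α β : List (VSym N Pl Ca Re)}
    (h : Derives1 P α β) : ∃ r ∈ P, ∃ pre post,
      α = pre ++ VSym.nt r.lhs :: post ∧ β = pre ++ r.rhs ++ post := by
  cases h with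
  | step r hr pre post => exact ⟨r, hr, pre, post, rfl, rfl⟩

lemma derives1_nil {P : Set (GRule N Pl Ca Re)} {β : List (VSym N Pl Ca Re)}
    (h : Derives1 P [] β) : False := by
  obtain ⟨r, hr, pre, post, h1, h2⟩ := derives1_inv h
  exact (List.append_ne_nil_of_right_ne_nil pre (by simp)) h1.symm

lemma derives_nil {P : Set (GRule N Pl Ca Re)} {β : List (VSym N Pl Ca Re)}
    (h : Derives P [] β) : β = [] := by
  induction h with
  | refl => rfl
  | tail _ h2 ih => subst ih; exact (derives1_nil h2).elim

lemma derives1_cons_t {P : Set (GRule N Pl Ca Re)} {i : VTerm Pl Ca Re}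
    {α β : List (VSym N Pl Ca Re)} (h : Derives1 P (VSym.t i :: α) β) :
    ∃ β', β = VSym.t i :: β' ∧ Derives1 P α β' := by
  obtain ⟨r, hr, pre, post, heq, rfl⟩ := derives1_inv h
  cases pre with
  | nil => simp at heq
  | cons x pre' =>
    simp only [List.cons_append, List.cons.injEq] at heq
    obtain ⟨hx, hα⟩ := heq
    subst hx hα
    exact ⟨pre' ++ r.rhs ++ post, by simp, Derives1.step r hr pre' post⟩

lemma derives_cons_t {P : Set (GRule N Pl Ca Re)} {i : VTerm Pl Ca Re}
    {α β : List (VSym N Pl Ca Re)} (h : Derives P (VSym.t i :: α) β) :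
    ∃ β', β = VSym.t i :: β' ∧ Derives P α β' := by
  induction h with
  | refl => exact ⟨α, rfl, Relation.ReflTransGen.refl⟩
  | tail _ h2 ih =>
    obtain ⟨β', rfl, hd⟩ := ih
    obtain ⟨β'', rfl, hd2⟩ := derives1_cons_t h2
    exact ⟨β'', rfl, hd.tail hd2⟩

lemma derives_cons_t_intro {P : Set (GRule N Pl Ca Re)} {i : VTerm Pl Ca Re}
    {α β : List (VSym N Pl Ca Re)} (h : Derives P α β) :
    Derives P (VSym.t i :: α) (VSym.t i :: β) := by
  refine Relation.ReflTransGen.lift (VSym.t i :: ·) (fun a b hab => ?_) _ _ h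
  cases hab with
  | step r hr pre post =>
    have := Derives1.step (P := P) r hr (VSym.t i :: pre) post
    simpa using this

lemma derives_head_nt {P : Set (GRule N Pl Ca Re)} {L : N} {i : VTerm Pl Ca Re}
    {rest : List (VSym N Pl Ca Re)} (h : Derives P [VSym.nt L] (VSym.t i :: rest)) :
    ∃ r ∈ P, r.lhs = L ∧ Derives P r.rhs (VSym.t i :: rest) := by
  rcases Relation.ReflTransGen.cases_head h with heq | ⟨γ, h1, h2⟩
  · simp at heq
  · obtain ⟨r, hr, pre, post, heq, rfl⟩ := derives1_inv h1
    cases pre with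
    | nil =>
      simp only [List.nil_append, List.cons.injEq] at heq
      obtain ⟨hl, hp⟩ := heq
      refine ⟨r, hr, by injection hl with h'; exact h'.symm, ?_⟩
      simpa [← hp, Derives] using h2
    | cons x pre' =>
      simp only [List.cons_append, List.cons.injEq] at heq
      exact absurd heq.2 (by simp)

lemma derives_pl_inv {P : Set (GRule N Pl Ca Re)} {L : N} {c : Pl}
    {rest : List (VSym N Pl Ca Re)}
    (h : Derives P [VSym.nt L] (VSym.t (VTerm.pl c) :: rest)) :
    ∃ L', GRule.lin L (VTerm.pl c) L' ∈ P ∧ Derives P [VSym.nt L'] rest := by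
  obtain ⟨r, hr, hlhs, hd⟩ := derives_head_nt h
  cases r with
  | eps L0 =>
    simp only [GRule.rhs] at hd
    simpa using derives_nil hd
  | lin L0 i L1 =>
    simp only [GRule.rhs] at hd
    obtain ⟨β', heq, hd'⟩ := derives_cons_t hd
    obtain ⟨hi, hrest⟩ : VSym.t (VTerm.pl c) = (VSym.t i : VSym N Pl Ca Re) ∧ rest = β' := by
      injection heq with h1 h2; exact ⟨h1, h2⟩
    injection hi with hi'
    simp only [GRule.lhs] at hlhs
    subst hlhs hrest hi'
    exact ⟨L1, hr, hd'⟩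
  | mat L0 a L1 b L2 =>
    simp only [GRule.rhs] at hd
    obtain ⟨β', heq, _⟩ := derives_cons_t hd
    injection heq with h1 _
    injection h1 with h1'
    exact absurd h1' (by simp)

lemma derives_pl_intro {P : Set (GRule N Pl Ca Re)} {L L' : N} {c : Pl}
    {rest : List (VSym N Pl Ca Re)}
    (hr : GRule.lin L (VTerm.pl c) L' ∈ P)
    (hd : Derives P [VSym.nt L'] rest) :
    Derives P [VSym.nt L] (VSym.t (VTerm.pl c) :: rest) := by
  have h1 : Derives1 P [VSym.nt L] [VSym.t (VTerm.pl c), VSym.nt L'] := by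
    have := Derives1.step (P := P) (GRule.lin L (VTerm.pl c) L') hr [] []
    simpa [GRule.lhs, GRule.rhs] using this
  exact (Relation.ReflTransGen.single h1).trans (derives_cons_t_intro hd)

lemma wellMatched_cons_pl {c : Pl} {w : List (VTerm Pl Ca Re)}
    (h : WellMatched (VTerm.pl c :: w)) : WellMatched w := by
  generalize heq : VTerm.pl c :: w = w' at h
  cases h with
  | nil => simp at heq
  | plain c' h => injection heq with h1 h2; exact h2 ▸ h
  | mat a b h1 h2 => simp only [List.cons_append, List.cons.injEq] at heq; exact absurd heq.1 (by simp)

lemma matchedRets_cons_pl {c : Pl} {w : List (VTerm Pl Ca Re)}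
    (h : MatchedRets (VTerm.pl c :: w)) : MatchedRets w := by
  generalize heq : VTerm.pl c :: w = w' at h
  cases h with
  | nil => simp at heq
  | plain c' h => injection heq with h1 h2; exact h2 ▸ h
  | callPend a h => injection heq with h1 h2; exact absurd h1 (by simp)
  | mat a b h1 h2 => simp only [List.cons_append, List.cons.injEq] at heq; exact absurd heq.1 (by simp)

/-- Correctness of the plain-symbol derivative for general VPGs. -/
theorem gDeltaPlain_correct (P : Set (GRule N Pl Ca Re)) (V0 : Set N)
    (hwf : GWellFormed V0 P) (c : Pl) (S S' : PState N) (T : PStack N Ca)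
    (w : List (VTerm Pl Ca Re))
    (hS' : S' = gDeltaPlain P c S) :
    GAccepts P S T (VTerm.pl c :: w) ↔ GAccepts P S' T w := by
  subst hS'
  constructor
  · intro h
    generalize heq : VTerm.pl c :: w = w' at h
    induction h with
    | bot L1 L2 h hd =>
      subst heq
      simp only [DerivesStr, List.map_cons] at hd
      obtain ⟨L3, hr, hd'⟩ := derives_pl_inv hd
      exact GAccepts.bot L1 L3 ⟨L2, h, hr⟩ hd'
    | mat b L1 L2 L3 L4 L5 h34 hd hwm h12 hrule hrec ih =>
      rename_i w1 w2
      cases w1 with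
      | nil => simp at heq
      | cons x w1' =>
        simp only [List.cons_append, List.cons.injEq] at heq
        obtain ⟨hx, hw⟩ := heq
        subst hx; subst hw
        simp only [DerivesStr, List.map_cons] at hd
        obtain ⟨L6, hr, hd'⟩ := derives_pl_inv hd
        exact GAccepts.mat b L1 L2 L3 L6 L5 ⟨L4, h34, hr⟩ hd'
          (wellMatched_cons_pl hwm) h12 hrule hrec
    | matPend b L1 L2 L3 L4 L5 h34 hd hwm h12 hrule hrec ih =>
      rename_i w1 w2
      cases w1 with
      | nil => simp at heq
      | cons x w1' =>
        simp only [List.cons_append, List.cons.injEq] at heq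
        obtain ⟨hx, hw⟩ := heq
        subst hx; subst hw
        simp only [List.map_cons, List.cons_append] at hd
        obtain ⟨L6, hr, hd'⟩ := derives_pl_inv hd
        exact GAccepts.matPend b L1 L2 L3 L6 L5 ⟨L4, h34, hr⟩ hd'
          (wellMatched_cons_pl hwm) h12 hrule hrec
    | pend L1 L2 L3 L4 h34 hd hmr h12 hrule =>
      subst heq
      simp only [DerivesStr, List.map_cons] at hd
      obtain ⟨L6, hr, hd'⟩ := derives_pl_inv hd
      exact GAccepts.pend L1 L2 L3 L6 ⟨L4, h34, hr⟩ hd'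
        (matchedRets_cons_pl hmr) h12 hrule
  · intro h
    cases h with
    | bot L1 L2 h hd =>
      obtain ⟨L0, h0, hr⟩ := h
      exact GAccepts.bot L1 L0 h0 (by simpa [DerivesStr, List.map_cons] using derives_pl_intro hr hd)
    | mat b L1 L2 L3 L4 L5 h34 hd hwm h12 hrule hrec =>
      obtain ⟨L0, h0, hr⟩ := h34
      rename_i w1 w2
      have : VTerm.pl c :: (w1 ++ VTerm.re b :: w2) =
          (VTerm.pl c :: w1) ++ VTerm.re b :: w2 := by simp
      rw [this]
      exact GAccepts.mat b L1 L2 L3 L0 L5 h0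
        (by simpa [DerivesStr, List.map_cons] using derives_pl_intro hr hd)
        (WellMatched.plain c hwm) h12 hrule hrec
    | matPend b L1 L2 L3 L4 L5 h34 hd hwm h12 hrule hrec =>
      obtain ⟨L0, h0, hr⟩ := h34
      rename_i w1 w2
      have : VTerm.pl c :: (w1 ++ VTerm.re b :: w2) =
          (VTerm.pl c :: w1) ++ VTerm.re b :: w2 := by simp
      rw [this]
      exact GAccepts.matPend b L1 L2 L3 L0 L5 h0
        (by simpa [List.map_cons] using derives_pl_intro hr hd)
        (WellMatched.plain c hwm) h12 hrule hrec
    | pend L1 L2 L3 L4 h34 hd hmr h12 hrule =>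
      obtain ⟨L0, h0, hr⟩ := h34
      exact GAccepts.pend L1 L2 L3 L0 h0
        (by simpa [DerivesStr, List.map_cons] using derives_pl_intro hr hd)
        (MatchedRets.plain c hmr) h12 hrule

end VPG
end
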